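/- Suppose θ₁ > 0 with sin(θ₁) ≠ 0 and θ₂ > 0 satisfy θ₁·cot(θ₁) = θ₂·coth(θ₂) = a. If a ∉ {0,1}, then (sin²(θ₁)/θ₁²)·F(θ₂) − (sinh²(θ₂)/θ₂²)·f(θ₁) = (π/2)·a⁻¹·(a−1)·(sin²(θ₁) + sinh²(θ₂))/(θ₁²θ₂²) ≠ 0, where f(θ) = −(π/2)·(θ − cos(θ)sin(θ))/θ³ and F(θ) = (π/2)·(θ − cosh(θ)sinh(θ))/θ³. -/

import Mathlib

/-!
Write `s = sin θ₁`, `c = cos θ₁`, `S = sinh θ₂`, `C = cosh θ₂`. The defining relations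
`θ₁ c = a s` and `θ₂ C = a S`, combined with `s² + c² = 1` and `C² - S² = 1`, give
`s² (θ₁² + a²) = θ₁²` and `S² (a² - θ₂²) = θ₂²`; eliminating `c` and `C` turns the claimed
identity into a polynomial consequence of these two. Nonvanishing holds because
`a = θ₂ coth θ₂ > 1`, which is the mean value theorem for `sinh` on `[0, θ₂]`.
-/

open Real

lemma sinh_lt_mul_cosh {x : ℝ} (hx : 0 < x) : sinh x < x * cosh x := by
  obtain ⟨ξ, ⟨hξ₀, hξx⟩, hξ⟩ := exists_deriv_eq_slope sinh hx
    continuous_sinh.continuousOn differentiable_sinh.differentiableOn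
  rw [Real.deriv_sinh, sinh_zero, sub_zero, sub_zero, eq_div_iff hx.ne'] at hξ
  have : cosh ξ < cosh x := cosh_lt_cosh.2 (by rwa [abs_of_pos hξ₀, abs_of_pos hx])
  nlinarith

lemma one_lt_mul_cosh_div_sinh {x : ℝ} (hx : 0 < x) : 1 < x * (cosh x / sinh x) := by
  rw [mul_div_assoc', one_lt_div (sinh_pos_iff.2 hx)]
  exact sinh_lt_mul_cosh hx

lemma det_identity {k x y s c S C a : ℝ} (hx : x ≠ 0) (hy : y ≠ 0) (ha : a ≠ 0)
    (hsc : s ^ 2 + c ^ 2 = 1) (hSC : C ^ 2 - S ^ 2 = 1)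
    (hc : x * c = a * s) (hC : y * C = a * S) :
    (s ^ 2 / x ^ 2) * (k * (y - C * S) / y ^ 3) - (S ^ 2 / y ^ 2) * (-k * (x - c * s) / x ^ 3) =
      k * a⁻¹ * (a - 1) * (s ^ 2 + S ^ 2) / (x ^ 2 * y ^ 2) := by
  have hs : s ^ 2 * (x ^ 2 + a ^ 2) = x ^ 2 := by
    linear_combination x ^ 2 * hsc - (a * s + c * x) * hc
  have hS : S ^ 2 * (a ^ 2 - y ^ 2) = y ^ 2 := by
    linear_combination y ^ 2 * hSC - (a * S + C * y) * hC
  have hcs : c * s = a * s ^ 2 / x := by field_simp; linear_combination s * hc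
  have hCS : C * S = a * S ^ 2 / y := by field_simp; linear_combination S * hC
  rw [hcs, hCS]
  field_simp
  linear_combination -k * (x ^ 2 * s ^ 2 * hS + y ^ 2 * S ^ 2 * hs)

theorem caseIII_general (θ₁ θ₂ a : ℝ) (h₂ : 0 < θ₂)
    (ha₁ : θ₁ * (Real.cos θ₁ / Real.sin θ₁) = a)
    (ha₂ : θ₂ * (Real.cosh θ₂ / Real.sinh θ₂) = a) :
    (Real.sin θ₁ ^ 2 / θ₁ ^ 2) *
        ((Real.pi / 2) * (θ₂ - Real.cosh θ₂ * Real.sinh θ₂) / θ₂ ^ 3) -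
      (Real.sinh θ₂ ^ 2 / θ₂ ^ 2) *
        (-(Real.pi / 2) * (θ₁ - Real.cos θ₁ * Real.sin θ₁) / θ₁ ^ 3) =
    (Real.pi / 2) * a⁻¹ * (a - 1) *
      (Real.sin θ₁ ^ 2 + Real.sinh θ₂ ^ 2) / (θ₁ ^ 2 * θ₂ ^ 2) ∧
    (Real.pi / 2) * a⁻¹ * (a - 1) *
      (Real.sin θ₁ ^ 2 + Real.sinh θ₂ ^ 2) / (θ₁ ^ 2 * θ₂ ^ 2) ≠ 0 := by
  have ha : 1 < a := ha₂ ▸ one_lt_mul_cosh_div_sinh h₂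
  have ha0 : a ≠ 0 := by positivity
  -- `a ≠ 0` rules out the junk cases `θ₁ = 0` and `sin θ₁ = 0` of `ha₁`
  have hθ₁ : θ₁ ≠ 0 := left_ne_zero_of_mul (ha₁ ▸ ha0)
  have hsin : sin θ₁ ≠ 0 := (div_ne_zero_iff.1 (right_ne_zero_of_mul (ha₁ ▸ ha0))).2
  have hsinh : 0 < sinh θ₂ := sinh_pos_iff.2 h₂
  have hc : θ₁ * cos θ₁ = a * sin θ₁ := by rw [← ha₁]; field_simp
  have hC : θ₂ * cosh θ₂ = a * sinh θ₂ := by rw [← ha₂]; field_simp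
  refine ⟨det_identity hθ₁ h₂.ne' ha0 (sin_sq_add_cos_sq θ₁) (cosh_sq_sub_sinh_sq θ₂) hc hC, ?_⟩
  have : 0 < a - 1 := sub_pos.2 ha
  positivity

/-- Case III (mixed regime): with `f(θ) = −(π/2)(θ − cos θ sin θ)/θ³` and
`F(θ) = (π/2)(θ − cosh θ sinh θ)/θ³`, if `θ₁ cot θ₁ = θ₂ coth θ₂ = a ∉ {0,1}` then the
determinant expression equals `(π/2)a⁻¹(a−1)(sin²θ₁ + sinh²θ₂)/(θ₁²θ₂²)` and is nonzero. -/
theorem caseIII (θ₁ θ₂ a : ℝ) (h₁ : 0 < θ₁) (h₂ : 0 < θ₂) (hs₁ : Real.sin θ₁ ≠ 0)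
    (ha₁ : θ₁ * (Real.cos θ₁ / Real.sin θ₁) = a)
    (ha₂ : θ₂ * (Real.cosh θ₂ / Real.sinh θ₂) = a)
    (ha0 : a ≠ 0) (ha1 : a ≠ 1) :
    (Real.sin θ₁ ^ 2 / θ₁ ^ 2) *
        ((Real.pi / 2) * (θ₂ - Real.cosh θ₂ * Real.sinh θ₂) / θ₂ ^ 3) -
      (Real.sinh θ₂ ^ 2 / θ₂ ^ 2) *
        (-(Real.pi / 2) * (θ₁ - Real.cos θ₁ * Real.sin θ₁) / θ₁ ^ 3) =
    (Real.pi / 2) * a⁻¹ * (a - 1) *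
      (Real.sin θ₁ ^ 2 + Real.sinh θ₂ ^ 2) / (θ₁ ^ 2 * θ₂ ^ 2) ∧
    (Real.pi / 2) * a⁻¹ * (a - 1) *
      (Real.sin θ₁ ^ 2 + Real.sinh θ₂ ^ 2) / (θ₁ ^ 2 * θ₂ ^ 2) ≠ 0 :=
  caseIII_general θ₁ θ₂ a h₂ ha₁ ha₂
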